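/- Let C be a commutative principal ideal domain with an infinite set P of nonzero prime ideals. Let C⁺ be the commutative C-algebra obtained from the polynomial ring over C in indeterminates y_p, one for each p ∈ P, by imposing the relations c·y_p = 0 for every c ∈ p and every p ∈ P. Set k = A = C⁺ and let M be the ideal of A generated by all the y_p. Let B be the field of fractions of C, made a k-algebra via the homomorphism k → C sending each y_p to 0 followed by the inclusion C → Frac(C), and let N be any nonzero B-vector space. Then M is a faithful A-module, N is a faithful B-module, A ⊗_k B is nonzero, but M ⊗_k N = 0, hence M ⊗_k N is not a faithful (A ⊗_k B)-module. -/

import Mathlib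

open TensorProduct

/-- The ideal of relations `c • y_p = 0` (for `c ∈ p`, `p ∈ P`) in the polynomial ring
over `C` in indeterminates `y_p`, `p ∈ P`. -/
noncomputable def CPlusRel (C : Type*) [CommRing C] (P : Set (Ideal C)) :
    Ideal (MvPolynomial (↥P) C) :=
  Ideal.span { f | ∃ (p : ↥P) (c : C), c ∈ (p : Ideal C) ∧
    f = MvPolynomial.C c * MvPolynomial.X p }

/-- The commutative `C`-algebra `C⁺`, obtained from the polynomial ring over `C` in
indeterminates `y_p` (`p ∈ P`) by imposing the relations `c·y_p = 0` for all `c ∈ p`. -/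
abbrev CPlus (C : Type*) [CommRing C] (P : Set (Ideal C)) : Type _ :=
  MvPolynomial (↥P) C ⧸ CPlusRel C P

/-- The ideal `M` of `k = A = C⁺` generated by all the `y_p`. -/
noncomputable def yIdeal (C : Type*) [CommRing C] (P : Set (Ideal C)) : Ideal (CPlus C P) :=
  Ideal.span (Set.range fun p : ↥P =>
    Ideal.Quotient.mk (CPlusRel C P) (MvPolynomial.X p))

/-- The ring homomorphism `C⁺ → C` sending each `y_p` to `0`. -/
noncomputable def CPlusToC (C : Type*) [CommRing C] (P : Set (Ideal C)) :
    CPlus C P →+* C :=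
  Ideal.Quotient.lift (CPlusRel C P)
    (MvPolynomial.aeval (fun _ : ↥P => (0 : C))).toRingHom
    (by
      intro a ha
      have h : CPlusRel C P ≤
          RingHom.ker (MvPolynomial.aeval (fun _ : ↥P => (0 : C))).toRingHom := by
        rw [CPlusRel, Ideal.span_le]
        rintro f ⟨p, c, _, rfl⟩
        simp [RingHom.mem_ker]
      exact h ha)

/-- `B = Frac(C)` is a `C⁺`-algebra via `C⁺ → C → Frac(C)` (each `y_p ↦ 0`). -/
noncomputable instance fracCPlusAlgebra (C : Type*) [CommRing C] [IsDomain C]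
    (P : Set (Ideal C)) : Algebra (CPlus C P) (FractionRing C) :=
  ((algebraMap C (FractionRing C)).comp (CPlusToC C P)).toAlgebra

/-!
A polynomial `f` lies in the relation ideal of `C⁺` iff each coefficient of a monomial `m` lies
in the sum of the primes `p` with `y_p` occurring in `m`. If `f · y_q` is a relation for every
`q`, the constant term of `f` therefore lies in every `p ∈ P`, hence is `0` because a nonzero
element of a Dedekind domain lies in only finitely many ideals; the other coefficients are
handled by choosing `q` among the variables of the monomial. So `M` is faithful.

On the other hand, each generator `y_p` of `M` is killed by some `0 ≠ c ∈ p`, while `c` acts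
invertibly on the `Frac(C)`-vector space `N`; hence `y_p ⊗ n = y_p ⊗ c (c⁻¹ n) = c y_p ⊗ c⁻¹ n = 0`
and `M ⊗ N = 0`, although `A ⊗_A B ≅ B ≠ 0`.
-/

namespace Ideal

variable {R : Type*} [CommRing R] [IsDedekindDomain R]

theorem finite_setOf_mem {c : R} (hc : c ≠ 0) : {I : Ideal R | c ∈ I}.Finite := by
  have := UniqueFactorizationMonoid.fintypeSubtypeDvd (span {c}) (by simpa using hc)
  refine (Set.finite_coe_iff (s := {I | I ∣ span {c}}).1
    (Finite.of_fintype {I // I ∣ span {c}})).subset fun I hI => ?_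
  rwa [Set.mem_ofPred_eq, dvd_iff_le, span_singleton_le_iff_mem]

theorem eq_zero_of_forall_mem_of_infinite {S : Set (Ideal R)} (hS : S.Infinite) {c : R}
    (hc : ∀ I ∈ S, c ∈ I) : c = 0 :=
  by_contra fun h => hS ((finite_setOf_mem h).subset hc)

end Ideal

namespace TensorProduct

variable {R M N : Type*} [CommSemiring R] [AddCommMonoid M] [Module R M]
  [AddCommMonoid N] [Module R N]

theorem subsingleton_of_span_eq_top_of_smul_eq_zero {s : Set M}
    (hs : Submodule.span R s = ⊤)
    (h : ∀ m ∈ s, ∃ a : R, a • m = 0 ∧ Function.Surjective (a • · : N → N)) :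
    Subsingleton (M ⊗[R] N) := by
  have tmul_eq_zero (m : M) (n : N) : m ⊗ₜ[R] n = 0 := by
    suffices hle : ⊤ ≤ ⨅ n : N, LinearMap.ker ((TensorProduct.mk R M N).flip n) by
      simpa using Submodule.mem_iInf _ |>.1 (hle Submodule.mem_top) n
    rw [← hs, Submodule.span_le]
    intro m hm
    obtain ⟨a, ham, ha⟩ := h m hm
    simp only [SetLike.mem_coe, Submodule.mem_iInf, LinearMap.mem_ker, LinearMap.flip_apply,
      mk_apply]
    intro n
    obtain ⟨n, rfl⟩ := ha n
    rw [← smul_tmul, ham, zero_tmul]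
  refine subsingleton_of_forall_eq 0 fun x => ?_
  induction x using TensorProduct.induction_on with
  | zero => rfl
  | tmul m n => exact tmul_eq_zero m n
  | add x y hx hy => rw [hx, hy, add_zero]

end TensorProduct

namespace CPlusRel

open MvPolynomial

variable {C : Type*} [CommRing C] {P : Set (Ideal C)}

noncomputable def coeffIdeal (P : Set (Ideal C)) (m : ↥P →₀ ℕ) : Ideal C :=
  ⨆ p ∈ m.support, (p : Ideal C)

theorem le_coeffIdeal {m : ↥P →₀ ℕ} {p : ↥P} (hp : p ∈ m.support) :
    (p : Ideal C) ≤ coeffIdeal P m :=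
  le_iSup₂ (f := fun (p : ↥P) (_ : p ∈ m.support) => (p : Ideal C)) p hp

theorem coeffIdeal_mono {m m' : ↥P →₀ ℕ} (h : m.support ⊆ m'.support) :
    coeffIdeal P m ≤ coeffIdeal P m' :=
  iSup₂_le fun _ hp => le_coeffIdeal (h hp)

theorem coeffIdeal_add_single (m : ↥P →₀ ℕ) (q : ↥P) :
    coeffIdeal P (m + Finsupp.single q 1) = (q : Ideal C) ⊔ coeffIdeal P m := by
  classical
  rw [coeffIdeal, Finsupp.support_add_eq_union, Finsupp.support_single _ one_ne_zero,
    Finset.union_comm, Finset.singleton_union, Finset.iSup_insert, coeffIdeal]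

theorem coeff_mem_coeffIdeal {f : MvPolynomial (↥P) C} (hf : f ∈ CPlusRel C P)
    (m : ↥P →₀ ℕ) : coeff m f ∈ coeffIdeal P m := by
  classical
  induction hf using Submodule.span_induction generalizing m with
  | mem g hg =>
    obtain ⟨p, c, hc, rfl⟩ := hg
    rw [coeff_C_mul, coeff_X]
    split_ifs with h
    · subst h
      exact le_coeffIdeal (p := p) (by simp) (by simpa using hc)
    · simp
  | zero => simp
  | add x y _ _ hx hy => simpa using add_mem (hx m) (hy m)
  | smul a x _ hx =>
    rw [smul_eq_mul, coeff_mul]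
    refine Ideal.sum_mem _ fun z hz => Ideal.mul_mem_left _ _ (coeffIdeal_mono ?_ (hx z.2))
    rw [← Finset.HasAntidiagonal.mem_antidiagonal.1 hz]
    exact Finsupp.support_mono le_add_self

theorem monomial_mem {m : ↥P →₀ ℕ} {d : C} (hd : d ∈ coeffIdeal P m) :
    monomial m d ∈ CPlusRel C P := by
  suffices coeffIdeal P m ≤ ((CPlusRel C P).restrictScalars C).comap (monomial m) from this hd
  refine iSup₂_le fun p hp c hc => ?_
  have hle : Finsupp.single p 1 ≤ m :=
    Finsupp.single_le_iff.2 (Nat.one_le_iff_ne_zero.2 (Finsupp.mem_support_iff.1 hp))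
  have hfactor :
      monomial m c = MvPolynomial.C c * X p * monomial (m - Finsupp.single p 1) 1 := by
    rw [← pow_one (X p), C_mul_X_pow_eq_monomial, monomial_mul, mul_one,
      add_tsub_cancel_of_le hle]
  have hgen : MvPolynomial.C c * X p ∈ CPlusRel C P := Ideal.subset_span ⟨p, c, hc, rfl⟩
  simpa [hfactor] using Ideal.mul_mem_right (monomial (m - Finsupp.single p 1) 1) _ hgen

theorem mem_iff {f : MvPolynomial (↥P) C} :
    f ∈ CPlusRel C P ↔ ∀ m, coeff m f ∈ coeffIdeal P m :=
  ⟨coeff_mem_coeffIdeal, fun h => f.as_sum ▸ Ideal.sum_mem _ fun m _ => monomial_mem (h m)⟩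

theorem coeff_mem_of_mul_X_mem {f : MvPolynomial (↥P) C} {q : ↥P}
    (h : f * X q ∈ CPlusRel C P) (m : ↥P →₀ ℕ) :
    coeff m f ∈ (q : Ideal C) ⊔ coeffIdeal P m := by
  rw [← coeffIdeal_add_single, ← coeff_mul_X m q]
  exact coeff_mem_coeffIdeal h _

theorem mem_of_forall_mul_X_mem [IsDedekindDomain C] (hP : P.Infinite)
    {f : MvPolynomial (↥P) C} (h : ∀ q, f * X q ∈ CPlusRel C P) : f ∈ CPlusRel C P := by
  refine mem_iff.2 fun m => ?_
  rcases m.support.eq_empty_or_nonempty with hm | ⟨q, hq⟩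
  · obtain rfl := Finsupp.support_eq_empty.1 hm
    have hcoeff : coeff 0 f = 0 := Ideal.eq_zero_of_forall_mem_of_infinite hP fun q hq => by
      simpa [coeffIdeal] using coeff_mem_of_mul_X_mem (h ⟨q, hq⟩) 0
    simp [hcoeff]
  · simpa [sup_eq_right.2 (le_coeffIdeal hq)] using coeff_mem_of_mul_X_mem (h q) m

end CPlusRel

namespace CPlus

open MvPolynomial

variable {C : Type*} [CommRing C] {P : Set (Ideal C)}

theorem eq_zero_of_mul_yIdeal_eq_zero [IsDedekindDomain C] (hP : P.Infinite) (x : CPlus C P)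
    (h : ∀ m ∈ yIdeal C P, x * m = 0) : x = 0 := by
  obtain ⟨f, rfl⟩ := Ideal.Quotient.mk_surjective x
  refine Ideal.Quotient.eq_zero_iff_mem.2 (CPlusRel.mem_of_forall_mul_X_mem hP fun q => ?_)
  rw [← Ideal.Quotient.eq_zero_iff_mem, map_mul]
  exact h _ (Ideal.subset_span ⟨q, rfl⟩)

theorem algebraMap_mk_C [IsDomain C] (c : C) :
    algebraMap (CPlus C P) (FractionRing C) (Ideal.Quotient.mk _ (MvPolynomial.C c)) =
      algebraMap C (FractionRing C) c := by
  simp [RingHom.algebraMap_toAlgebra, CPlusToC]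

theorem subsingleton_yIdeal_tensor [IsDomain C] (hne : ∀ p ∈ P, p ≠ ⊥) (N : Type*)
    [AddCommGroup N] [Module (FractionRing C) N] [Module (CPlus C P) N]
    [IsScalarTower (CPlus C P) (FractionRing C) N] :
    Subsingleton (↥(yIdeal C P) ⊗[CPlus C P] N) := by
  refine TensorProduct.subsingleton_of_span_eq_top_of_smul_eq_zero
    Submodule.span_span_coe_preimage ?_
  rintro ⟨_, _⟩ ⟨p, rfl⟩
  obtain ⟨c, hcp, hc0⟩ := (Submodule.ne_bot_iff _).1 (hne p p.2)
  have hc : algebraMap C (FractionRing C) c ≠ 0 :=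
    IsFractionRing.to_map_ne_zero_of_mem_nonZeroDivisors (mem_nonZeroDivisors_of_ne_zero hc0)
  refine ⟨Ideal.Quotient.mk _ (MvPolynomial.C c), Subtype.ext ?_,
    fun n => ⟨(algebraMap C (FractionRing C) c)⁻¹ • n, ?_⟩⟩
  · rw [Submodule.coe_smul, smul_eq_mul, ← map_mul, ZeroMemClass.coe_zero,
      Ideal.Quotient.eq_zero_iff_mem]
    exact Ideal.subset_span ⟨p, c, hcp, rfl⟩
  · dsimp only
    rw [← algebraMap_smul (FractionRing C), algebraMap_mk_C, smul_smul, mul_inv_cancel₀ hc,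
      one_smul]

end CPlus

theorem counterexample_CPlus_frac_general
    (C : Type*) [CommRing C] [IsDomain C] [IsPrincipalIdealRing C]
    (P : Set (Ideal C)) (hP : P.Infinite)
    (hne : ∀ p ∈ P, p ≠ ⊥)
    (N : Type*) [AddCommGroup N] [Module (FractionRing C) N] [Nontrivial N]
    [Module (CPlus C P) N] [IsScalarTower (CPlus C P) (FractionRing C) N] :
    (∀ x : CPlus C P, (∀ m ∈ yIdeal C P, x * m = 0) → x = 0) ∧
    FaithfulSMul (FractionRing C) N ∧
    Nontrivial ((CPlus C P) ⊗[CPlus C P] (FractionRing C)) ∧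
    Subsingleton ((↥(yIdeal C P)) ⊗[CPlus C P] N) ∧
    (∀ φ : ((CPlus C P) ⊗[CPlus C P] (FractionRing C)) →ₗ[CPlus C P]
        Module.End (CPlus C P) ((↥(yIdeal C P)) ⊗[CPlus C P] N),
      ¬ Function.Injective φ) := by
  have hMN := CPlus.subsingleton_yIdeal_tensor hne N
  have hAB : Nontrivial (CPlus C P ⊗[CPlus C P] FractionRing C) :=
    (Algebra.TensorProduct.lid (CPlus C P) (FractionRing C)).toEquiv.nontrivial
  exact ⟨CPlus.eq_zero_of_mul_yIdeal_eq_zero hP, inferInstance, hAB, hMN,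
    fun φ hφ => not_nontrivial _ hφ.nontrivial⟩

/-- **Counterexample (iii).**  Let `C` be a commutative principal ideal domain with an
infinite set `P` of nonzero prime ideals, let `k = A = C⁺` and let `M` be the ideal of `A`
generated by all the `y_p`.  Let `B = Frac(C)`, a `k`-algebra via `y_p ↦ 0`, and let `N` be
any nonzero `B`-vector space (viewed as `k`-module by restriction of scalars).  Then `M` is
a faithful `A`-module, `N` is a faithful `B`-module, `A ⊗[k] B` is nonzero, but
`M ⊗[k] N = 0`; hence no `k`-linear action of `A ⊗[k] B` on `M ⊗[k] N` can be injective,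
so `M ⊗[k] N` is not a faithful `(A ⊗[k] B)`-module. -/
theorem counterexample_CPlus_frac
    (C : Type*) [CommRing C] [IsDomain C] [IsPrincipalIdealRing C]
    (P : Set (Ideal C)) (hP : P.Infinite)
    (hprime : ∀ p ∈ P, p.IsPrime) (hne : ∀ p ∈ P, p ≠ ⊥)
    (N : Type*) [AddCommGroup N] [Module (FractionRing C) N] [Nontrivial N]
    [Module (CPlus C P) N] [IsScalarTower (CPlus C P) (FractionRing C) N] :
    (∀ x : CPlus C P, (∀ m ∈ yIdeal C P, x * m = 0) → x = 0) ∧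
    FaithfulSMul (FractionRing C) N ∧
    Nontrivial ((CPlus C P) ⊗[CPlus C P] (FractionRing C)) ∧
    Subsingleton ((↥(yIdeal C P)) ⊗[CPlus C P] N) ∧
    (∀ φ : ((CPlus C P) ⊗[CPlus C P] (FractionRing C)) →ₗ[CPlus C P]
        Module.End (CPlus C P) ((↥(yIdeal C P)) ⊗[CPlus C P] N),
      ¬ Function.Injective φ) :=
  counterexample_CPlus_frac_general C P hP hne N
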